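/- Endpoint optimality for the rank-one case with d = 0: let a, c ∈ ℝ^m, b ∈ ℝ^n, a₀, b₀ ∈ ℝ, and consider g(x,y) = (a₀ + a·x)(b₀ + b·y) + c·x over x ∈ {0,1}^m, y ∈ {0,1}^n. Then there exists a maximizer (x*, y*) of g over {0,1}^m × {0,1}^n such that b·y* = max_{y∈{0,1}^n} b·y or b·y* = min_{y∈{0,1}^n} b·y. -/

import Mathlib

/-!
For fixed `x`, the objective `g(x, y)` is affine in `s = b·y` with slope `a₀ + a·x`. Take any
maximizer `(x₀, y₀)` (the feasible set is finite); according to the sign of the slope at `x₀`,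
replacing `y₀` by a binary vector maximizing resp. minimizing `b·y` does not decrease `g`.
-/

/-- The rank-one objective with `d = 0`:
`g(x,y) = (a₀ + a·x)(b₀ + b·y) + c·x`. -/
noncomputable def rankOneObj {m n : ℕ} (a c : Fin m → ℝ) (b : Fin n → ℝ) (a₀ b₀ : ℝ)
    (x : Fin m → ℝ) (y : Fin n → ℝ) : ℝ :=
  (a₀ + ∑ i, a i * x i) * (b₀ + ∑ j, b j * y j) + ∑ i, c i * x i

section Binary

variable {ι κ : Type*}

def IsBinary (x : ι → ℝ) : Prop := ∀ i, x i = 0 ∨ x i = 1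

theorem isBinary_zero : IsBinary (0 : ι → ℝ) := fun _ => Or.inl rfl

theorem finite_setOf_isBinary [Finite ι] : {x : ι → ℝ | IsBinary x}.Finite := by
  convert Set.Finite.pi (t := fun _ : ι => ({0, 1} : Set ℝ)) fun _ => Set.toFinite _ using 1
  ext x
  simp [IsBinary]

theorem exists_forall_le_of_isBinary [Finite ι] [Finite κ] (f : (ι → ℝ) → (κ → ℝ) → ℝ) :
    ∃ x₀ y₀, IsBinary x₀ ∧ IsBinary y₀ ∧
      ∀ x y, IsBinary x → IsBinary y → f x y ≤ f x₀ y₀ := by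
  obtain ⟨⟨x₀, y₀⟩, ⟨hx₀, hy₀⟩, hmax⟩ :=
    Set.exists_max_image _ (fun p : (ι → ℝ) × (κ → ℝ) => f p.1 p.2)
      (finite_setOf_isBinary.prod finite_setOf_isBinary) ⟨(0, 0), isBinary_zero, isBinary_zero⟩
  exact ⟨x₀, y₀, hx₀, hy₀, fun x y hx hy => hmax (x, y) ⟨hx, hy⟩⟩

noncomputable def binaryArgmax (b : ι → ℝ) : ι → ℝ := fun j => if 0 ≤ b j then 1 else 0

noncomputable def binaryArgmin (b : ι → ℝ) : ι → ℝ := fun j => if b j < 0 then 1 else 0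

theorem isBinary_binaryArgmax (b : ι → ℝ) : IsBinary (binaryArgmax b) := fun j => by
  unfold binaryArgmax; split_ifs <;> simp

theorem isBinary_binaryArgmin (b : ι → ℝ) : IsBinary (binaryArgmin b) := fun j => by
  unfold binaryArgmin; split_ifs <;> simp

variable [Fintype ι]

theorem sum_mul_le_sum_mul_binaryArgmax (b : ι → ℝ) {y : ι → ℝ} (hy : IsBinary y) :
    ∑ j, b j * y j ≤ ∑ j, b j * binaryArgmax b j := by
  refine Finset.sum_le_sum fun j _ => ?_
  unfold binaryArgmax
  rcases hy j with h | h <;> split_ifs <;> simp [h] <;> linarith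

theorem sum_mul_binaryArgmin_le_sum_mul (b : ι → ℝ) {y : ι → ℝ} (hy : IsBinary y) :
    ∑ j, b j * binaryArgmin b j ≤ ∑ j, b j * y j := by
  refine Finset.sum_le_sum fun j _ => ?_
  unfold binaryArgmin
  rcases hy j with h | h <;> split_ifs <;> simp [h] <;> linarith

end Binary

section RankOne

variable {m n : ℕ} {a c : Fin m → ℝ} {b : Fin n → ℝ} {a₀ b₀ : ℝ} {x : Fin m → ℝ}
  {y y' : Fin n → ℝ}

theorem rankOneObj_le_of_slope_nonneg (ht : 0 ≤ a₀ + ∑ i, a i * x i)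
    (hy : ∑ j, b j * y j ≤ ∑ j, b j * y' j) :
    rankOneObj a c b a₀ b₀ x y ≤ rankOneObj a c b a₀ b₀ x y' := by
  unfold rankOneObj
  gcongr

theorem rankOneObj_le_of_slope_nonpos (ht : a₀ + ∑ i, a i * x i ≤ 0)
    (hy : ∑ j, b j * y' j ≤ ∑ j, b j * y j) :
    rankOneObj a c b a₀ b₀ x y ≤ rankOneObj a c b a₀ b₀ x y' := by
  unfold rankOneObj
  nlinarith

end RankOne

/-- Endpoint optimality for the rank-one case with `d = 0`: there is a maximizer
`(x*, y*)` of `g(x,y) = (a₀ + a·x)(b₀ + b·y) + c·x` over binary vectors such that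
`b·y*` is either the maximum or the minimum of `b·y` over binary `y`. -/
theorem stmt_16 (m n : ℕ) (a c : Fin m → ℝ) (b : Fin n → ℝ) (a₀ b₀ : ℝ) :
    ∃ xs : Fin m → ℝ, ∃ ys : Fin n → ℝ,
      (∀ i, xs i = 0 ∨ xs i = 1) ∧ (∀ j, ys j = 0 ∨ ys j = 1) ∧
      (∀ x : Fin m → ℝ, ∀ y : Fin n → ℝ,
        (∀ i, x i = 0 ∨ x i = 1) → (∀ j, y j = 0 ∨ y j = 1) →
        rankOneObj a c b a₀ b₀ x y ≤ rankOneObj a c b a₀ b₀ xs ys) ∧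
      ((∀ y : Fin n → ℝ, (∀ j, y j = 0 ∨ y j = 1) →
          (∑ j, b j * y j) ≤ ∑ j, b j * ys j) ∨
       (∀ y : Fin n → ℝ, (∀ j, y j = 0 ∨ y j = 1) →
          (∑ j, b j * ys j) ≤ ∑ j, b j * y j)) := by
  obtain ⟨x₀, y₀, hx₀, hy₀, hmax⟩ := exists_forall_le_of_isBinary (rankOneObj a c b a₀ b₀)
  rcases le_total 0 (a₀ + ∑ i, a i * x₀ i) with ht | ht
  · refine ⟨x₀, binaryArgmax b, hx₀, isBinary_binaryArgmax b, fun x y hx hy => ?_,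
      Or.inl fun y hy => sum_mul_le_sum_mul_binaryArgmax b hy⟩
    exact (hmax x y hx hy).trans
      (rankOneObj_le_of_slope_nonneg ht (sum_mul_le_sum_mul_binaryArgmax b hy₀))
  · refine ⟨x₀, binaryArgmin b, hx₀, isBinary_binaryArgmin b, fun x y hx hy => ?_,
      Or.inr fun y hy => sum_mul_binaryArgmin_le_sum_mul b hy⟩
    exact (hmax x y hx hy).trans
      (rankOneObj_le_of_slope_nonpos ht (sum_mul_binaryArgmin_le_sum_mul b hy₀))
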